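/- arXiv:1812.03435 — 6 statements merged into one kernel-verified Lean document; each statement's English description precedes it below -/
import Mathlib

section
/- Let V be a simple b-module and suppose there exists t ∈ ℤ_+ such that (a) the action of L_t on V is injective, and (b) L_i V = 0 for all integers i > t. Then G_{j−1/2} V = 0 for all integers j > t. -/
/-- A module over the subalgebra `b = ⊕_{i ≥ 0} ℂ L_i ⊕ ⊕_{i ≥ 1} ℂ G_{i-1/2}` of the
Neveu–Schwarz algebra. `L i` is the action of `L_i` and `G j` is the action of `G_{j + 1/2}`
(that is, of `G_{i - 1/2}` for `i = j + 1 ≥ 1`). -/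
structure BRep : Type 1 where
  carrier : Type
  [isAddCommGroup : AddCommGroup carrier]
  [isModule : Module ℂ carrier]
  L : ℕ → carrier →ₗ[ℂ] carrier
  G : ℕ → carrier →ₗ[ℂ] carrier
  rel_LL : ∀ (m n : ℕ) (v : carrier),
    L m (L n v) - L n (L m v) = ((m : ℂ) - n) • L (m + n) v
  rel_LG : ∀ (m j : ℕ) (v : carrier),
    L m (G j v) - G j (L m v) = (((m : ℂ) - 2 * j - 1) / 2) • G (m + j) v
  rel_GG : ∀ (j k : ℕ) (v : carrier),
    G j (G k v) + G k (G j v) = (2 : ℂ) • L (j + k + 1) v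

attribute [instance] BRep.isAddCommGroup BRep.isModule

def BRep.Invariant (V : BRep) (p : Submodule ℂ V.carrier) : Prop :=
  (∀ (i : ℕ), ∀ v ∈ p, V.L i v ∈ p) ∧ (∀ (j : ℕ), ∀ v ∈ p, V.G j v ∈ p)

def BRep.IsSimple (V : BRep) : Prop :=
  (∃ v : V.carrier, v ≠ 0) ∧
    ∀ p : Submodule ℂ V.carrier, V.Invariant p → p = ⊥ ∨ p = ⊤

/-- Let `V` be a simple `b`-module and suppose there is `t ∈ ℤ_+` such that
the action of `L_t` on `V` is injective and `L_i V = 0` for all `i > t`. Then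
`G_{j - 1/2} V = 0` for all integers `j > t` (in our indexing, `G_{j+1/2} V = 0` for `j ≥ t`). -/
theorem simple_bmodule_G_annihilates
    (V : BRep) (hV : V.IsSimple) (t : ℕ) (ht : 0 < t)
    (hinj : Function.Injective (V.L t))
    (hvan : ∀ i : ℕ, t < i → ∀ v : V.carrier, V.L i v = 0) :
    ∀ j : ℕ, t ≤ j → ∀ v : V.carrier, V.G j v = 0 := by
  -- key: if L_m = 0 and m ≠ 2j+1 then G_{m+j} = 0
  have key : ∀ m j : ℕ, t < m → m ≠ 2 * j + 1 → ∀ v : V.carrier, V.G (m + j) v = 0 := by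
    intro m j hm hne v
    have hrel := V.rel_LG m j v
    rw [hvan m hm, hvan m hm, map_zero, sub_zero] at hrel
    have hc : ((m : ℂ) - 2 * j - 1) / 2 ≠ 0 := by
      have h1 : (m : ℂ) - 2 * j - 1 ≠ 0 := by
        intro h
        apply hne
        have h2 : (m : ℂ) = 2 * j + 1 := by linear_combination h
        exact_mod_cast h2
      exact div_ne_zero h1 two_ne_zero
    exact (smul_eq_zero.mp hrel.symm).resolve_left hc
  -- step 1: G_n = 0 for n ≥ 2t+1
  have step1 : ∀ n : ℕ, 2 * t + 1 ≤ n → ∀ v : V.carrier, V.G n v = 0 := by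
    intro n hn v
    by_cases h3 : n = 3 * t + 1
    · have h := key (2 * t) (t + 1) (by omega) (by omega) v
      rwa [show 2 * t + (t + 1) = n by omega] at h
    · have h := key (n - t) t (by omega) (by omega) v
      rwa [show n - t + t = n by omega] at h
  -- anticommutation for j ≥ t
  have anti : ∀ j k : ℕ, t ≤ j → ∀ v : V.carrier,
      V.G j (V.G k v) = - V.G k (V.G j v) := by
    intro j k hj v
    have h := V.rel_GG j k v
    rw [hvan (j + k + 1) (by omega), smul_zero] at h
    exact eq_neg_of_add_eq_zero_left h
  -- squares vanish for j ≥ t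
  have sq : ∀ j : ℕ, t ≤ j → ∀ v : V.carrier, V.G j (V.G j v) = 0 := by
    intro j hj v
    have h := V.rel_GG j j v
    rw [hvan (j + j + 1) (by omega), smul_zero] at h
    have h2 : (2 : ℂ) • V.G j (V.G j v) = 0 := by rw [two_smul]; exact h
    exact (smul_eq_zero.mp h2).resolve_left two_ne_zero
  -- the common kernel submodule
  let K : Submodule ℂ V.carrier :=
    { carrier := {v | ∀ j, t ≤ j → V.G j v = 0}
      add_mem' := by intro a b ha hb j hj; simp [map_add, ha j hj, hb j hj]
      zero_mem' := by intro j hj; simp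
      smul_mem' := by intro c a ha j hj; simp [map_smul, ha j hj] }
  have memK : ∀ v : V.carrier, v ∈ K ↔ ∀ j, t ≤ j → V.G j v = 0 := fun v => Iff.rfl
  have hKinv : V.Invariant K := by
    constructor
    · intro i v hv
      rw [memK] at hv ⊢
      intro j hj
      have h := V.rel_LG i j v
      rw [hv j hj, map_zero, hv (i + j) (by omega), smul_zero, zero_sub] at h
      exact neg_eq_zero.mp h
    · intro k v hv
      rw [memK] at hv ⊢
      intro j hj
      have h := V.rel_GG j k v
      rw [hvan (j + k + 1) (by omega), smul_zero, hv j hj, map_zero, add_zero] at h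
      exact h
  -- build a nonzero element of K
  have build : ∀ n : ℕ, ∀ S : Finset ℕ, S ⊆ Finset.Icc t (2 * t) →
      (Finset.Icc t (2 * t) \ S).card = n →
      ∀ w : V.carrier, w ≠ 0 → (∀ k ∈ S, V.G k w = 0) → ∃ u, u ≠ 0 ∧ u ∈ K := by
    intro n
    induction n with
    | zero =>
      intro S hS hcard w hw hSw
      refine ⟨w, hw, (memK w).mpr ?_⟩
      intro j hj
      by_cases hj2 : j ≤ 2 * t
      · apply hSw
        have hmem : j ∈ Finset.Icc t (2 * t) := Finset.mem_Icc.mpr ⟨hj, hj2⟩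
        have hempty : Finset.Icc t (2 * t) \ S = ∅ := Finset.card_eq_zero.mp hcard
        by_contra hjS
        have : j ∈ Finset.Icc t (2 * t) \ S := Finset.mem_sdiff.mpr ⟨hmem, hjS⟩
        simp [hempty] at this
      · exact step1 j (by omega) w
    | succ n ih =>
      intro S hS hcard w hw hSw
      by_cases hK : ∀ j, t ≤ j → V.G j w = 0
      · exact ⟨w, hw, (memK w).mpr hK⟩
      · push_neg at hK
        obtain ⟨j, hj, hGj⟩ := hK
        have hj2 : j ≤ 2 * t := by
          by_contra h
          exact hGj (step1 j (by omega) w)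
        have hjS : j ∉ S := fun h => hGj (hSw j h)
        have hjd : j ∈ Finset.Icc t (2 * t) \ S :=
          Finset.mem_sdiff.mpr ⟨Finset.mem_Icc.mpr ⟨hj, hj2⟩, hjS⟩
        refine ih (insert j S) (Finset.insert_subset (Finset.mem_Icc.mpr ⟨hj, hj2⟩) hS) ?_
          (V.G j w) hGj ?_
        · rw [Finset.sdiff_insert, Finset.card_erase_of_mem hjd, hcard]
          omega
        · intro k hk
          rcases Finset.mem_insert.mp hk with rfl | hkS
          · exact sq k hj w
          · have hkt : t ≤ k := (Finset.mem_Icc.mp (hS hkS)).1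
            rw [anti k j hkt w, hSw k hkS, map_zero, neg_zero]
  obtain ⟨v0, hv0⟩ := hV.1
  obtain ⟨u, hu, huK⟩ := build (Finset.Icc t (2 * t)).card ∅ (by simp) (by simp) v0 hv0 (by simp)
  rcases hV.2 K hKinv with h | h
  · exact absurd (h ▸ huK) (by simpa using hu)
  · intro j hj v
    have hvK : v ∈ K := h ▸ Submodule.mem_top
    exact (memK v).mp hvK j hj
end

section
/- Let V be a simple restricted N-module. Then there exists t ∈ ℤ_+ such that for all integers i ≥ t the actions of L_i and G_{i−1/2} on V are locally nilpotent. -/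
/-- A module over the Neveu–Schwarz algebra. `L m` is the action of `L_m`,
`G j` is the action of `G_{j - 1/2”}`, `C` is the action of the central element `c`. -/
structure NSRep : Type 1 where
  carrier : Type
  [isAddCommGroup : AddCommGroup carrier]
  [isModule : Module ℂ carrier]
  L : ℤ → carrier →ₗ[ℂ] carrier
  G : ℤ → carrier →ₗ[ℂ] carrier
  C : carrier →ₗ[ℂ] carrier
  commC_L : ∀ (m : ℤ) (v : carrier), C (L m v) = L m (C v)
  commC_G : ∀ (j : ℤ) (v : carrier), C (G j v) = G j (C v)
  rel_LL : ∀ (m n : ℤ) (v : carrier),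
    L m (L n v) - L n (L m v)
      = ((m : ℂ) - n) • L (m + n) v
        + (if m + n = 0 then ((m : ℂ) ^ 3 - m) / 12 else 0) • C v
  rel_LG : ∀ (m j : ℤ) (v : carrier),
    L m (G j v) - G j (L m v) = (((m : ℂ) - 2 * j + 1) / 2) • G (m + j) v
  rel_GG : ∀ (j k : ℤ) (v : carrier),
    G j (G k v) + G k (G j v)
      = (2 : ℂ) • L (j + k - 1) v
        + (if j + k = 1 then ((j : ℂ) ^ 2 - j) / 3 else 0) • C v

attribute [instance] NSRep.isAddCommGroup NSRep.isModule

def NSRep.Invariant (M : NSRep) (p : Submodule ℂ M.carrier) : Prop :=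
  (∀ (m : ℤ), ∀ v ∈ p, M.L m v ∈ p) ∧ (∀ (j : ℤ), ∀ v ∈ p, M.G j v ∈ p) ∧
    (∀ v ∈ p, M.C v ∈ p)

def NSRep.IsSimple (M : NSRep) : Prop :=
  (∃ v : M.carrier, v ≠ 0) ∧
    ∀ p : Submodule ℂ M.carrier, M.Invariant p → p = ⊥ ∨ p = ⊤

def NSRep.IsRestricted (M : NSRep) : Prop :=
  ∀ v : M.carrier, ∃ N : ℤ, ∀ i : ℤ, N ≤ i → M.L i v = 0 ∧ M.G i v = 0

def NSRep.HasCentralCharge (M : NSRep) (ℓ : ℂ) : Prop :=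
  ∀ v : M.carrier, M.C v = ℓ • v

/-- The action of an endomorphism `f` on a module is locally nilpotent if for every vector `v`
there is `n ∈ ℤ_+` with `fⁿ v = 0`. -/
def LocallyNilpotentEnd {α : Type} [AddCommGroup α] [Module ℂ α] (f : α →ₗ[ℂ] α) : Prop :=
  ∀ v : α, ∃ n : ℕ, 0 < n ∧ ((f : Module.End ℂ α) ^ n) v = 0

section Aux

private lemma pow_apply_eq_zero_of_le {α : Type} [AddCommGroup α] [Module ℂ α]
    (f : Module.End ℂ α) {n k : ℕ} (h : n ≤ k) {x : α} (hx : (f ^ n) x = 0) :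
    (f ^ k) x = 0 := by
  have hk : f ^ k = f ^ (k - n) * f ^ n := by
    rw [← pow_add]; congr 1; omega
  rw [hk, Module.End.mul_apply, hx, map_zero]

private lemma NSRep.pow_C (V : NSRep) (i : ℤ) :
    ∀ (n : ℕ) (w : V.carrier),
      ((V.L i : Module.End ℂ V.carrier) ^ n) (V.C w)
        = V.C (((V.L i : Module.End ℂ V.carrier) ^ n) w) := by
  intro n
  induction n with
  | zero => intro w; simp
  | succ n ih =>
    intro w
    rw [pow_succ, Module.End.mul_apply, Module.End.mul_apply]
    rw [show (V.L i : Module.End ℂ V.carrier) (V.C w) = V.C (V.L i w) from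
      (V.commC_L i w).symm]
    exact ih (V.L i w)

private lemma NSRep.key (V : NSRep) (hres : V.IsRestricted) {i : ℤ} (hi : 1 ≤ i) :
    ∀ n' : ℕ, ∀ w : V.carrier, ((V.L i : Module.End ℂ V.carrier) ^ n') w = 0 →
      ∀ m : ℤ,
        (∃ n : ℕ, ((V.L i : Module.End ℂ V.carrier) ^ n) (V.L m w) = 0) ∧
        (∃ n : ℕ, ((V.L i : Module.End ℂ V.carrier) ^ n) (V.G m w) = 0) := by
  set f := (V.L i : Module.End ℂ V.carrier) with hf
  intro n'
  induction n' with
  | zero =>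
    intro w hw m
    rw [pow_zero, Module.End.one_apply] at hw
    subst hw
    exact ⟨⟨1, by simp⟩, ⟨1, by simp⟩⟩
  | succ n' ih =>
    intro w hw m
    obtain ⟨Nw, hNw⟩ := hres w
    have hw' : (f ^ n') (V.L i w) = 0 := by
      rw [pow_succ, Module.End.mul_apply] at hw
      exact hw
    have hCw : ∀ k : ℕ, n' + 1 ≤ k → (f ^ k) (V.C w) = 0 := by
      intro k hk
      have h1 : (f ^ (n' + 1)) (V.C w) = 0 := by
        rw [NSRep.pow_C, hw, map_zero]
      exact pow_apply_eq_zero_of_le f hk h1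
    have inner : ∀ d : ℕ, ∀ m : ℤ, (Nw - m).toNat ≤ d →
        (∃ n : ℕ, (f ^ n) (V.L m w) = 0) ∧ (∃ n : ℕ, (f ^ n) (V.G m w) = 0) := by
      intro d
      induction d with
      | zero =>
        intro m hm
        have h1 : Nw ≤ m := by omega
        refine ⟨⟨1, ?_⟩, ⟨1, ?_⟩⟩
        · rw [pow_one]; show V.L i (V.L m w) = 0
          rw [(hNw m h1).1, map_zero]
        · rw [pow_one]; show V.L i (V.G m w) = 0
          rw [(hNw m h1).2, map_zero]
      | succ d ihd =>
        intro m hm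
        by_cases hNm : Nw ≤ m
        · refine ⟨⟨1, ?_⟩, ⟨1, ?_⟩⟩
          · rw [pow_one]; show V.L i (V.L m w) = 0
            rw [(hNw m hNm).1, map_zero]
          · rw [pow_one]; show V.L i (V.G m w) = 0
            rw [(hNw m hNm).2, map_zero]
        · have hm' : (Nw - (m + i)).toNat ≤ d := by omega
          obtain ⟨⟨nB, hB⟩, ⟨nB', hB'⟩⟩ := ihd (m + i) hm'
          obtain ⟨⟨nA, hA⟩, ⟨nA', hA'⟩⟩ := ih (V.L i w) hw' m
          have hB2 : (f ^ nB) (V.L (i + m) w) = 0 := by rwa [add_comm i m]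
          have hB2' : (f ^ nB') (V.G (i + m) w) = 0 := by rwa [add_comm i m]
          constructor
          · refine ⟨nA + nB + n' + 1 + 1, ?_⟩
            have e : V.L i (V.L m w)
                = V.L m (V.L i w) + (((i : ℂ) - m) • V.L (i + m) w
                  + (if i + m = 0 then ((i : ℂ) ^ 3 - i) / 12 else 0) • V.C w) := by
              have h := V.rel_LL i m w
              rw [sub_eq_iff_eq_add'] at h
              exact h
            rw [pow_succ, Module.End.mul_apply]
            rw [show f (V.L m w) = V.L i (V.L m w) from rfl, e]
            rw [map_add, map_add, map_smul, map_smul]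
            rw [pow_apply_eq_zero_of_le f (by omega) hA,
                pow_apply_eq_zero_of_le f (by omega) hB2,
                hCw _ (by omega)]
            simp
          · refine ⟨nA' + nB' + 1, ?_⟩
            have e : V.L i (V.G m w)
                = V.G m (V.L i w) + (((i : ℂ) - 2 * m + 1) / 2) • V.G (i + m) w := by
              have h := V.rel_LG i m w
              rw [sub_eq_iff_eq_add'] at h
              exact h
            rw [pow_succ, Module.End.mul_apply]
            rw [show f (V.G m w) = V.L i (V.G m w) from rfl, e]
            rw [map_add, map_smul]
            rw [pow_apply_eq_zero_of_le f (by omega) hA',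
                pow_apply_eq_zero_of_le f (by omega) hB2']
            simp
    exact inner (Nw - m).toNat m le_rfl

private def NSRep.nilSub (V : NSRep) (i : ℤ) : Submodule ℂ V.carrier where
  carrier := {w | ∃ n : ℕ, ((V.L i : Module.End ℂ V.carrier) ^ n) w = 0}
  zero_mem' := ⟨1, by simp⟩
  add_mem' := by
    rintro a b ⟨n, hn⟩ ⟨k, hk⟩
    exact ⟨n + k, by
      rw [map_add, pow_apply_eq_zero_of_le _ (by omega) hn,
        pow_apply_eq_zero_of_le _ (by omega) hk, add_zero]⟩
  smul_mem' := by
    rintro c a ⟨n, hn⟩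
    exact ⟨n, by rw [map_smul, hn, smul_zero]⟩

private lemma NSRep.mem_nilSub (V : NSRep) (i : ℤ) (w : V.carrier) :
    w ∈ V.nilSub i ↔ ∃ n : ℕ, ((V.L i : Module.End ℂ V.carrier) ^ n) w = 0 :=
  Iff.rfl

end Aux

/-- Let `V` be a simple restricted module over the Neveu–Schwarz algebra.
Then there exists `t ∈ ℤ_+` such that for all integers `i ≥ t` the actions of `L_i` and
`G_{i-1/2}` on `V` are locally nilpotent. -/
theorem simple_restricted_locally_nilpotent
    (V : NSRep) (hsimple : V.IsSimple) (hres : V.IsRestricted) :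
    ∃ t : ℕ, 0 < t ∧ ∀ i : ℤ, (t : ℤ) ≤ i →
      LocallyNilpotentEnd (V.L i) ∧ LocallyNilpotentEnd (V.G i) := by
  obtain ⟨v0, hv0⟩ := hsimple.1
  obtain ⟨N, hN⟩ := hres v0
  refine ⟨(max N 1).toNat, by omega, ?_⟩
  intro i hi
  have hcast : ((max N 1).toNat : ℤ) = max N 1 := Int.toNat_of_nonneg (by omega)
  have hi1 : 1 ≤ i := by omega
  have hiN : N ≤ i := by omega
  have main : ∀ j : ℤ, 1 ≤ j → N ≤ j → LocallyNilpotentEnd (V.L j) := by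
    intro j hj1 hjN
    have hinv : V.Invariant (V.nilSub j) := by
      refine ⟨?_, ?_, ?_⟩
      · rintro m v ⟨n, hn⟩
        exact (V.key hres hj1 n v hn m).1
      · rintro m v ⟨n, hn⟩
        exact (V.key hres hj1 n v hn m).2
      · rintro v ⟨n, hn⟩
        exact ⟨n, by rw [V.pow_C, hn, map_zero]⟩
    have hmem : ∀ w : V.carrier, ∃ n : ℕ,
        ((V.L j : Module.End ℂ V.carrier) ^ n) w = 0 := by
      rcases hsimple.2 _ hinv with hbot | htop
      · exfalso
        have hv0mem : v0 ∈ V.nilSub j :=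
          ⟨1, by rw [pow_one]; show V.L j v0 = 0; exact (hN j hjN).1⟩
        rw [hbot, Submodule.mem_bot] at hv0mem
        exact hv0 hv0mem
      · intro w
        have : w ∈ V.nilSub j := htop ▸ Submodule.mem_top
        exact this
    intro w
    obtain ⟨n, hn⟩ := hmem w
    exact ⟨n + 1, by omega, pow_apply_eq_zero_of_le _ (by omega) hn⟩
  refine ⟨main i hi1 hiN, ?_⟩
  have hL := main (2 * i - 1) (by omega) (by omega)
  intro w
  obtain ⟨n, hn0, hn⟩ := hL w
  refine ⟨2 * n, by omega, ?_⟩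
  have sq : ∀ u : V.carrier, V.G i (V.G i u) = V.L (2 * i - 1) u := by
    intro u
    have h := V.rel_GG i i u
    rw [if_neg (by omega), zero_smul, add_zero] at h
    have h2 : (2 : ℂ) • (V.G i (V.G i u)) = (2 : ℂ) • V.L (i + i - 1) u := by
      rw [two_smul]; exact h
    have h3 := smul_right_injective V.carrier (two_ne_zero (α := ℂ)) h2
    rwa [show i + i - 1 = 2 * i - 1 by ring] at h3
  have pow2 : ∀ k : ℕ, ∀ u : V.carrier,
      ((V.G i : Module.End ℂ V.carrier) ^ (2 * k)) u
        = ((V.L (2 * i - 1) : Module.End ℂ V.carrier) ^ k) u := by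
    intro k
    induction k with
    | zero => intro u; simp
    | succ k ihk =>
      intro u
      rw [show 2 * (k + 1) = 2 * k + 1 + 1 by ring, pow_succ, pow_succ,
        Module.End.mul_apply, Module.End.mul_apply, pow_succ, Module.End.mul_apply]
      rw [show (V.G i : Module.End ℂ V.carrier) ((V.G i : Module.End ℂ V.carrier) u)
            = V.L (2 * i - 1) u from sq u]
      exact ihk (V.L (2 * i - 1) u)
  rw [pow2 n w]
  exact hn
end

section
/- Any simple module V over the Lie superalgebra b^(1) is, up to parity change, of the form V = U + G_{1/2}U, where U is a simple module over the even part b^(1)_0̄ (realized as a simple b^(1)_0̄-submodule of the even part of V). In particular, V is one-dimensional if G_{1/2}U = 0. -/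
open Polynomial Module

section Key

variable {W : Type} [AddCommGroup W] [Module ℂ W] (f : Module.End ℂ W)

lemma span_inv_finrank (hs : ∀ p : Submodule ℂ W, (∀ x ∈ p, f x ∈ p) → p = ⊥ ∨ p = ⊤)
    (v : W) (hv : v ≠ 0) (hinv : ∀ x ∈ Submodule.span ℂ {v}, f x ∈ Submodule.span ℂ {v}) :
    Module.finrank ℂ W = 1 := by
  rcases hs (Submodule.span ℂ {v}) hinv with h | h
  · exact absurd (h ▸ Submodule.mem_span_singleton_self v) (by simpa using hv)
  · exact finrank_eq_one v hv fun w =>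
      Submodule.mem_span_singleton.mp (h ▸ Submodule.mem_top)

lemma key_poly (hs : ∀ p : Submodule ℂ W, (∀ x ∈ p, f x ∈ p) → p = ⊥ ∨ p = ⊤)
    (v : W) (hv : v ≠ 0) :
    ∀ n (P : ℂ[X]), P.natDegree ≤ n → P ≠ 0 → (aeval f P) v = 0 →
      Module.finrank ℂ W = 1 := by
  intro n
  induction n with
  | zero =>
    intro P hdeg hP0 hPv
    have hC := Polynomial.eq_C_of_natDegree_le_zero hdeg
    rw [hC, aeval_C] at hPv
    have hc : (P.coeff 0) ≠ 0 := fun h => hP0 (by rw [hC, h, map_zero])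
    exact absurd hPv (by simp [Algebra.algebraMap_eq_smul_one, hc, hv])
  | succ n ih =>
    intro P hdeg hP0 hPv
    by_cases hd : P.natDegree ≤ n
    · exact ih P hd hP0 hPv
    have hdpos : 0 < P.degree := by
      rw [← Polynomial.natDegree_pos_iff_degree_pos]; omega
    obtain ⟨a, ha⟩ := IsAlgClosed.exists_root P hdpos.ne'
    obtain ⟨Q, hPQ⟩ := (Polynomial.dvd_iff_isRoot.mpr ha)
    have hQ0 : Q ≠ 0 := by rintro rfl; simp at hPQ; exact hP0 hPQ
    have hQdeg : Q.natDegree ≤ n := by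
      have := Polynomial.natDegree_mul (Polynomial.X_sub_C_ne_zero a) hQ0
      rw [← hPQ, Polynomial.natDegree_X_sub_C] at this
      omega
    set w := (aeval f Q) v with hw
    by_cases hwz : w = 0
    · exact ih Q hQdeg hQ0 hwz
    · have hfw : f w = a • w := by
        have h1 : (aeval f (X - C a)) w = 0 := by
          rw [hw, ← Module.End.mul_apply, ← map_mul, ← hPQ, hPv]
        rw [map_sub, aeval_X, aeval_C] at h1
        have h2 : f w - a • w = 0 := by
          simpa [Algebra.algebraMap_eq_smul_one] using h1
        exact sub_eq_zero.mp h2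
      -- the eigenspace of f for a is invariant and nonzero, hence everything
      set p : Submodule ℂ W := LinearMap.ker (f - a • LinearMap.id) with hp
      have hmem : ∀ x, x ∈ p ↔ f x = a • x := by
        intro x
        simp [hp, LinearMap.mem_ker, sub_eq_zero]
      have hpinv : ∀ x ∈ p, f x ∈ p := by
        intro x hx
        rw [hmem] at hx ⊢
        rw [hx, map_smul, hx]
      rcases hs p hpinv with h | h
      · exact absurd (h ▸ (hmem w).mpr hfw) (by simpa using hwz)
      · have hall : ∀ x : W, f x = a • x := fun x => (hmem x).mp (h ▸ Submodule.mem_top)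
        refine span_inv_finrank f hs v hv ?_
        intro x hx
        rw [hall x]
        exact Submodule.smul_mem _ a hx

lemma key (hs : ∀ p : Submodule ℂ W, (∀ x ∈ p, f x ∈ p) → p = ⊥ ∨ p = ⊤)
    (v : W) (hv : v ≠ 0) : Module.finrank ℂ W = 1 := by
  set q₁ : Submodule ℂ W := Submodule.span ℂ (Set.range fun n : ℕ => (f ^ (n + 1)) v) with hq₁
  have hinv : ∀ x ∈ q₁, f x ∈ q₁ := by
    intro x hx
    induction hx using Submodule.span_induction with
    | mem x h =>
      obtain ⟨n, rfl⟩ := h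
      refine Submodule.subset_span ⟨n + 1, ?_⟩
      show (f ^ (n + 1 + 1)) v = f ((f ^ (n + 1)) v)
      rw [pow_succ', Module.End.mul_apply]
    | zero => simp
    | add x y _ _ hx hy => rw [map_add]; exact Submodule.add_mem _ hx hy
    | smul c x _ hx => rw [map_smul]; exact Submodule.smul_mem _ c hx
  rcases hs q₁ hinv with h | h
  · -- f v = 0, so X annihilates v
    have hfv : (aeval f (X : ℂ[X])) v = 0 := by
      have : (f ^ (0 + 1)) v ∈ q₁ := Submodule.subset_span ⟨0, rfl⟩
      rw [h, Submodule.mem_bot] at this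
      simpa using this
    exact key_poly f hs v hv 1 (X : ℂ[X]) (by simp) Polynomial.X_ne_zero hfv
  · -- v ∈ q₁ = ⊤ : get a polynomial relation
    have hvq : v ∈ q₁ := h ▸ Submodule.mem_top
    rw [hq₁, Finsupp.mem_span_range_iff_exists_finsupp] at hvq
    obtain ⟨c, hc⟩ := hvq
    set P : ℂ[X] := ∑ n ∈ c.support, C (c n) * X ^ (n + 1) with hP
    rw [Finsupp.sum] at hc
    have hPv : (aeval f P) v = v := by
      have h1 : (aeval f P) v = ∑ n ∈ c.support, c n • (f ^ (n + 1)) v := by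
        rw [hP, map_sum, LinearMap.sum_apply]
        refine Finset.sum_congr rfl fun n _ => ?_
        rw [map_mul, aeval_C, map_pow, aeval_X, Algebra.algebraMap_eq_smul_one,
          smul_mul_assoc, one_mul, LinearMap.smul_apply]
      rw [h1, hc]
    have hQv : (aeval f (1 - P)) v = 0 := by
      rw [map_sub, LinearMap.sub_apply, map_one, hPv]
      simp
    have hQ0 : (1 - P : ℂ[X]) ≠ 0 := by
      intro habs
      have hcoeff : (1 - P : ℂ[X]).coeff 0 = 1 := by
        rw [Polynomial.coeff_sub, Polynomial.coeff_one, hP, Polynomial.finset_sum_coeff]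
        simp [Polynomial.coeff_C_mul, Polynomial.coeff_X_pow]
      rw [habs] at hcoeff
      simp at hcoeff
    exact key_poly f hs v hv _ _ le_rfl hQ0 hQv

end Key



/-- A (ℤ₂-graded) module over the 3-dimensional solvable Lie superalgebra
`b^{(1)} = b / m^{(1)}`, with even basis (the images of) `L₀, L₁` and odd basis `G_{1/2}`.
The relations are `[L₀, L₁] = -L₁`, `[L₀, G_{1/2}] = -(1/2)G_{1/2}`, `[L₁, G_{1/2}] = 0`
and `[G_{1/2}, G_{1/2}] = 2L₁` (so `G_{1/2}² = L₁` on modules). -/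
structure B1Rep : Type 1 where
  carrier : Type
  [isAddCommGroup : AddCommGroup carrier]
  [isModule : Module ℂ carrier]
  even : Submodule ℂ carrier
  odd : Submodule ℂ carrier
  graded : IsCompl even odd
  L0 : carrier →ₗ[ℂ] carrier
  L1 : carrier →ₗ[ℂ] carrier
  G : carrier →ₗ[ℂ] carrier
  L0_even : ∀ v ∈ even, L0 v ∈ even
  L0_odd : ∀ v ∈ odd, L0 v ∈ odd
  L1_even : ∀ v ∈ even, L1 v ∈ even
  L1_odd : ∀ v ∈ odd, L1 v ∈ odd
  G_even : ∀ v ∈ even, G v ∈ odd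
  G_odd : ∀ v ∈ odd, G v ∈ even
  rel_L0L1 : ∀ v, L0 (L1 v) - L1 (L0 v) = -(L1 v)
  rel_L0G : ∀ v, L0 (G v) - G (L0 v) = (-(1 : ℂ)/2) • G v
  rel_L1G : ∀ v, L1 (G v) = G (L1 v)
  rel_GG : ∀ v, G (G v) = L1 v

attribute [instance] B1Rep.isAddCommGroup B1Rep.isModule

/-- A (graded) `b^{(1)}`-submodule. -/
def B1Rep.IsSubmod (V : B1Rep) (p : Submodule ℂ V.carrier) : Prop :=
  (∀ v ∈ p, V.L0 v ∈ p) ∧ (∀ v ∈ p, V.L1 v ∈ p) ∧ (∀ v ∈ p, V.G v ∈ p) ∧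
    p = (p ⊓ V.even) ⊔ (p ⊓ V.odd)

def B1Rep.IsSimple (V : B1Rep) : Prop :=
  (∃ v : V.carrier, v ≠ 0) ∧
    ∀ p : Submodule ℂ V.carrier, V.IsSubmod p → p = ⊥ ∨ p = ⊤

-- the sup with G-image is a graded submodule
lemma sup_G_issubmod (V : B1Rep) (p : Submodule ℂ V.carrier) (hpe : p ≤ V.even)
    (h0 : ∀ v ∈ p, V.L0 v ∈ p) (h1 : ∀ v ∈ p, V.L1 v ∈ p) :
    V.IsSubmod (p ⊔ p.map V.G) := by
  have hmap : ∀ x ∈ p.map V.G, ∃ y ∈ p, V.G y = x := by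
    intro x hx; exact Submodule.mem_map.mp hx
  refine ⟨?_, ?_, ?_, ?_⟩
  · intro v hv
    obtain ⟨u, hu, w, hw, rfl⟩ := Submodule.mem_sup.mp hv
    obtain ⟨y, hy, rfl⟩ := hmap w hw
    rw [map_add]
    refine Submodule.add_mem _ (Submodule.mem_sup_left (h0 u hu)) ?_
    have hrel : V.L0 (V.G y) = V.G (V.L0 y) + (-(1 : ℂ)/2) • V.G y := by
      exact sub_eq_iff_eq_add'.mp (V.rel_L0G y)
    rw [hrel]
    exact Submodule.mem_sup_right (Submodule.add_mem _
      (Submodule.mem_map_of_mem (h0 y hy))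
      (Submodule.smul_mem _ _ (Submodule.mem_map_of_mem hy)))
  · intro v hv
    obtain ⟨u, hu, w, hw, rfl⟩ := Submodule.mem_sup.mp hv
    obtain ⟨y, hy, rfl⟩ := hmap w hw
    rw [map_add, V.rel_L1G]
    exact Submodule.add_mem _ (Submodule.mem_sup_left (h1 u hu))
      (Submodule.mem_sup_right (Submodule.mem_map_of_mem (h1 y hy)))
  · intro v hv
    obtain ⟨u, hu, w, hw, rfl⟩ := Submodule.mem_sup.mp hv
    obtain ⟨y, hy, rfl⟩ := hmap w hw
    rw [map_add, V.rel_GG]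
    exact Submodule.add_mem _ (Submodule.mem_sup_right (Submodule.mem_map_of_mem hu))
      (Submodule.mem_sup_left (h1 y hy))
  · refine le_antisymm ?_ (sup_le inf_le_left inf_le_left)
    intro v hv
    obtain ⟨u, hu, w, hw, rfl⟩ := Submodule.mem_sup.mp hv
    obtain ⟨y, hy, rfl⟩ := hmap w hw
    refine Submodule.add_mem _ (Submodule.mem_sup_left ⟨Submodule.mem_sup_left hu, hpe hu⟩)
      (Submodule.mem_sup_right ⟨Submodule.mem_sup_right (Submodule.mem_map_of_mem hy),
        V.G_even y (hpe hy)⟩)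

-- when G vanishes identically and one homogeneous part is everything,
-- every L0-invariant subspace is a submodule
lemma l0_simple_of_G_zero (V : B1Rep) (hV : V.IsSimple) (hG : ∀ v : V.carrier, V.G v = 0)
    (hgr : V.even = ⊤ ∨ V.odd = ⊤) :
    ∀ p : Submodule ℂ V.carrier, (∀ x ∈ p, V.L0 x ∈ p) → p = ⊥ ∨ p = ⊤ := by
  have hL1 : ∀ v : V.carrier, V.L1 v = 0 := by
    intro v; rw [← V.rel_GG v, hG v, map_zero]
  intro p hp
  refine hV.2 p ⟨hp, ?_, ?_, ?_⟩
  · intro v _; rw [hL1]; exact p.zero_mem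
  · intro v _; rw [hG]; exact p.zero_mem
  · rcases hgr with h | h
    · rw [h, inf_top_eq]
      exact (sup_eq_left.mpr inf_le_left).symm
    · rw [h, inf_top_eq]
      exact (sup_eq_right.mpr inf_le_left).symm

lemma finrank_of_G_zero (V : B1Rep) (hV : V.IsSimple) (hG : ∀ v : V.carrier, V.G v = 0)
    (hgr : V.even = ⊤ ∨ V.odd = ⊤) : Module.finrank ℂ V.carrier = 1 := by
  obtain ⟨v, hv⟩ := hV.1
  exact key V.L0 (l0_simple_of_G_zero V hV hG hgr) v hv

/-- Any simple `b^{(1)}`-module `V` is, up to parity change, of the form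
`V = U + G_{1/2} U` where `U` is a simple module over the even part
`b^{(1)}_0̄ = ℂL₀ ⊕ ℂL₁`, realized as a simple `b^{(1)}_0̄`-submodule of a homogeneous part
of `V` (the even part, up to parity change).  In particular `V` is one dimensional when
`G_{1/2} U = 0`. -/
theorem b1_simple_module_structure (V : B1Rep) (hV : V.IsSimple) :
    ∃ U : Submodule ℂ V.carrier,
      (U ≤ V.even ∨ U ≤ V.odd) ∧
      (∀ v ∈ U, V.L0 v ∈ U) ∧ (∀ v ∈ U, V.L1 v ∈ U) ∧
      U ≠ ⊥ ∧
      (∀ q : Submodule ℂ V.carrier, q ≤ U →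
        (∀ v ∈ q, V.L0 v ∈ q) → (∀ v ∈ q, V.L1 v ∈ q) → q = ⊥ ∨ q = U) ∧
      U ⊔ U.map V.G = ⊤ ∧
      (U.map V.G = ⊥ → Module.finrank ℂ V.carrier = 1) := by
  obtain ⟨v₀, hv₀⟩ := hV.1
  have htopbot : (⊤ : Submodule ℂ V.carrier) ≠ ⊥ := by
    intro h
    exact hv₀ ((Submodule.mem_bot ℂ).mp (h ▸ Submodule.mem_top))
  by_cases he : V.even = ⊥
  · -- degenerate case : everything is odd, G = 0
    have ho : V.odd = ⊤ := by
      have := V.graded.sup_eq_top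
      rwa [he, bot_sup_eq] at this
    have hG : ∀ v : V.carrier, V.G v = 0 := by
      intro v
      have h1 : V.G v ∈ V.even := V.G_odd v (ho ▸ Submodule.mem_top)
      rw [he] at h1
      exact (Submodule.mem_bot ℂ).mp h1
    refine ⟨⊤, Or.inr (le_of_eq ho.symm), fun v _ => Submodule.mem_top,
      fun v _ => Submodule.mem_top, htopbot, ?_, by simp, fun _ =>
      finrank_of_G_zero V hV hG (Or.inr ho)⟩
    intro q _ hq0 _
    exact l0_simple_of_G_zero V hV hG (Or.inr ho) q hq0
  · -- main case : U = even part
    have hsup : ∀ p : Submodule ℂ V.carrier, p ≤ V.even → p ≠ ⊥ →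
        (∀ v ∈ p, V.L0 v ∈ p) → (∀ v ∈ p, V.L1 v ∈ p) → p ⊔ p.map V.G = ⊤ := by
      intro p hpe hpne h0 h1
      rcases hV.2 _ (sup_G_issubmod V p hpe h0 h1) with h | h
      · exact absurd (le_bot_iff.mp (h ▸ le_sup_left)) hpne
      · exact h
    have hUsup : V.even ⊔ (V.even).map V.G = ⊤ :=
      hsup V.even le_rfl he V.L0_even V.L1_even
    refine ⟨V.even, Or.inl le_rfl, V.L0_even, V.L1_even, he, ?_, hUsup, ?_⟩
    · -- simplicity of the even part as an L0, L1 module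
      intro q hqe hq0 hq1
      by_cases hqb : q = ⊥
      · exact Or.inl hqb
      right
      have hq : q ⊔ q.map V.G = ⊤ := hsup q hqe hqb hq0 hq1
      refine le_antisymm hqe ?_
      intro x hx
      obtain ⟨u, hu, w, hw, hx'⟩ := Submodule.mem_sup.mp (hq ▸ Submodule.mem_top : x ∈ q ⊔ q.map V.G)
      obtain ⟨y, hy, rfl⟩ := Submodule.mem_map.mp hw
      have hweven : V.G y ∈ V.even := by
        have : V.G y = x - u := by rw [← hx']; abel
        rw [this]
        exact Submodule.sub_mem _ hx (hqe hu)
      have hwodd : V.G y ∈ V.odd := V.G_even y (hqe hy)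
      have hwz : V.G y = 0 := Submodule.disjoint_def.mp V.graded.disjoint _ hweven hwodd
      rw [← hx', hwz, add_zero]
      exact hu
    · -- if G U = 0 then V is one dimensional
      intro hGU
      have heT : V.even = ⊤ := by rwa [hGU, sup_bot_eq] at hUsup
      have hoB : V.odd = ⊥ := by
        have := disjoint_iff.mp V.graded.disjoint
        rwa [heT, top_inf_eq] at this
      have hG : ∀ v : V.carrier, V.G v = 0 := by
        intro v
        have h1 : V.G v ∈ V.odd := V.G_even v (heT ▸ Submodule.mem_top)
        rw [hoB] at h1
        exact (Submodule.mem_bot ℂ).mp h1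
      exact finrank_of_G_zero V hV hG (Or.inl heT)
end

section
/- Let t ∈ ℤ_+ and let V be a finite-dimensional simple module over the Lie superalgebra p^(t). Then there exists k ∈ ℤ_+ such that p^(k)V = 0. -/
/-- A module over the Lie superalgebra `p^{(t)} = ⊕_{m>t} ℂ L_m ⊕ ⊕_{m>t} ℂ G_{m+1/2}`
(a subalgebra of the Neveu–Schwarz algebra).  `L m` is the action of `L_m` and `G j` is
the action of `G_{j+1/2}`; only the operators with index `> t` are part of the structure
(the relations are imposed only for indices `> t`). -/
structure PRep (t : ℕ) : Type 1 where
  carrier : Type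
  [isAddCommGroup : AddCommGroup carrier]
  [isModule : Module ℂ carrier]
  L : ℤ → carrier →ₗ[ℂ] carrier
  G : ℤ → carrier →ₗ[ℂ] carrier
  rel_LL : ∀ m n : ℤ, (t : ℤ) < m → (t : ℤ) < n → ∀ v : carrier,
    L m (L n v) - L n (L m v) = ((m : ℂ) - n) • L (m + n) v
  rel_LG : ∀ m j : ℤ, (t : ℤ) < m → (t : ℤ) < j → ∀ v : carrier,
    L m (G j v) - G j (L m v) = (((m : ℂ) - 2 * j - 1) / 2) • G (m + j) v
  rel_GG : ∀ j k : ℤ, (t : ℤ) < j → (t : ℤ) < k → ∀ v : carrier,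
    G j (G k v) + G k (G j v) = (2 : ℂ) • L (j + k + 1) v

attribute [instance] PRep.isAddCommGroup PRep.isModule

def PRep.Invariant {t : ℕ} (V : PRep t) (p : Submodule ℂ V.carrier) : Prop :=
  (∀ m : ℤ, (t : ℤ) < m → ∀ v ∈ p, V.L m v ∈ p) ∧
    (∀ j : ℤ, (t : ℤ) < j → ∀ v ∈ p, V.G j v ∈ p)

def PRep.IsSimple {t : ℕ} (V : PRep t) : Prop :=
  (∃ v : V.carrier, v ≠ 0) ∧
    ∀ p : Submodule ℂ V.carrier, V.Invariant p → p = ⊥ ∨ p = ⊤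

/-- Let `t ∈ ℤ_+` and let `V` be a finite dimensional simple module over
`p^{(t)}`.  Then there is `k ∈ ℤ_+` (with `k ≥ t`, so that `p^{(k)} ⊆ p^{(t)}`) such that
`p^{(k)} V = 0`, i.e. `L_m V = 0` and `G_{m+1/2} V = 0` for all `m > k`. -/
theorem pRep_finite_dimensional_simple_annihilated
    (t : ℕ) (ht : 0 < t) (V : PRep t)
    (hfd : FiniteDimensional ℂ V.carrier) (hsimple : V.IsSimple) :
    ∃ k : ℕ, 0 < k ∧ t ≤ k ∧ ∀ m : ℤ, (k : ℤ) < m →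
      (∀ v : V.carrier, V.L m v = 0) ∧ (∀ v : V.carrier, V.G m v = 0) := by
  classical
  -- operator-level [L_m, L_n] relation
  have opLL : ∀ m n : ℤ, (t:ℤ) < m → (t:ℤ) < n →
      (V.L m) * (V.L n) - (V.L n) * (V.L m) = ((m:ℂ) - n) • V.L (m+n) := by
    intro m n hm hn
    ext v
    simpa using V.rel_LL m n hm hn v
  -- the spans of tails of L operators
  set U : ℤ → Submodule ℂ (Module.End ℂ V.carrier) :=
    fun N => Submodule.span ℂ { f | ∃ n : ℤ, N ≤ n ∧ (t:ℤ) < n ∧ f = V.L n } with hUdef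
  have Umono : ∀ {N M : ℤ}, N ≤ M → U M ≤ U N := by
    intro N M h
    apply Submodule.span_mono
    rintro f ⟨n, hn, hn', rfl⟩
    exact ⟨n, le_trans h hn, hn', rfl⟩
  have hmem : ∀ n N : ℤ, N ≤ n → (t:ℤ) < n → V.L n ∈ U N := by
    intro n N hN ht'
    exact Submodule.subset_span ⟨n, hN, ht', rfl⟩
  -- stabilization
  obtain ⟨N₀, hN₀⟩ : ∃ N₀ : ℤ, ∀ N : ℤ, N₀ ≤ N → U N = U N₀ := by
    have hne : (Set.range fun N : ℤ => Module.finrank ℂ (U N)).Nonempty :=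
      ⟨_, ⟨0, rfl⟩⟩
    obtain ⟨N₀, hN₀⟩ := Nat.sInf_mem hne
    refine ⟨N₀, fun N hN => ?_⟩
    refine Submodule.eq_of_le_of_finrank_le (Umono hN) ?_
    have h1 : Module.finrank ℂ (U N₀) = sInf (Set.range fun N : ℤ => Module.finrank ℂ (U N)) := hN₀
    rw [h1]
    exact Nat.sInf_le ⟨N, rfl⟩
  set m₀ : ℤ := max N₀ ((t:ℤ)+1) with hm₀def
  -- all L_m for m ≥ m₀ vanish
  have hL0 : ∀ m : ℤ, m₀ ≤ m → V.L m = 0 := by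
    intro m hm
    have hmt : (t:ℤ) < m := lt_of_lt_of_le (by linarith [le_max_right N₀ ((t:ℤ)+1)]) hm
    have hmN : N₀ ≤ m := le_trans (le_max_left _ _) hm
    set W : Submodule ℂ (Module.End ℂ V.carrier) := U N₀ with hWdef
    set φ : Module.End ℂ V.carrier →ₗ[ℂ] Module.End ℂ V.carrier :=
      LinearMap.mulLeft ℂ (V.L m) - LinearMap.mulRight ℂ (V.L m) with hφdef
    have hφ_apply : ∀ g, φ g = (V.L m) * g - g * (V.L m) := fun g => rfl
    have hφW : ∀ x ∈ W, φ x ∈ W := by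
      have : Submodule.map φ W ≤ W := by
        rw [hWdef, hUdef]
        rw [Submodule.map_span_le]
        rintro f ⟨n, hn, hn', rfl⟩
        rw [hφ_apply, opLL m n hmt hn']
        exact Submodule.smul_mem _ _ (hmem (m+n) N₀ (by linarith) (by linarith))
      intro x hx
      exact this ⟨x, hx, rfl⟩
    set ψ : W →ₗ[ℂ] W := φ.restrict hφW with hψdef
    have hψ_apply : ∀ (x : W), (ψ x : Module.End ℂ V.carrier) = φ x := fun x => rfl
    -- surjectivity of ψ
    have hsurj : Function.Surjective ψ := by
      intro y
      have hy : (y : Module.End ℂ V.carrier) ∈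
          Submodule.map W.subtype (LinearMap.range ψ) := by
        have hle : U (2*m+1) ≤ Submodule.map W.subtype (LinearMap.range ψ) := by
          rw [hUdef, Submodule.span_le]
          rintro f ⟨s, hs, hs', rfl⟩
          have hsm : V.L (s - m) ∈ W := hmem (s-m) N₀ (by linarith) (by linarith)
          have hc : ((2:ℂ)*m - s) ≠ 0 := by
            have hzc : ((2*m - s : ℤ) : ℂ) ≠ 0 := Int.cast_ne_zero.mpr (by omega)
            intro h
            apply hzc
            push_cast
            linear_combination h
          have hcomm : φ (V.L (s - m)) = ((2:ℂ)*m - s) • V.L s := by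
            rw [hφ_apply, opLL m (s-m) hmt (by linarith)]
            congr 1
            · push_cast; ring
            · congr 1; ring
          set x : W := ((2:ℂ)*m - s)⁻¹ • (⟨V.L (s-m), hsm⟩ : W) with hxdef
          refine ⟨ψ x, LinearMap.mem_range_self _ _, ?_⟩
          show ((ψ x : W) : Module.End ℂ V.carrier) = V.L s
          rw [hψ_apply]
          have hxcoe : (x : Module.End ℂ V.carrier) = ((2:ℂ)*m - s)⁻¹ • V.L (s-m) := rfl
          rw [hxcoe, map_smul, hcomm, smul_smul, inv_mul_cancel₀ hc, one_smul]
        have hyW : (y : Module.End ℂ V.carrier) ∈ U (2*m+1) := by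
          have : U (2*m+1) = W := hN₀ _ (by linarith)
          rw [this]; exact y.2
        exact hle hyW
      obtain ⟨x, hx, hx'⟩ := hy
      obtain ⟨a, ha⟩ := hx
      exact ⟨a, by rw [ha]; exact Subtype.ext (by simpa using hx')⟩
    have : FiniteDimensional ℂ W := inferInstance
    have hinj : Function.Injective ψ := LinearMap.injective_iff_surjective.mpr hsurj
    have hLmW : V.L m ∈ W := by
      have : U m = W := hN₀ m hmN
      rw [← this]; exact hmem m m le_rfl hmt
    have hker : ψ ⟨V.L m, hLmW⟩ = 0 := by
      apply Subtype.ext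
      rw [hψ_apply]
      simp [hφ_apply, sub_self]
    have := hinj (by rw [hker, map_zero] : ψ ⟨V.L m, hLmW⟩ = ψ 0)
    have h0 : (⟨V.L m, hLmW⟩ : W) = 0 := this
    exact congrArg Subtype.val h0
  -- now the G operators
  have hG0 : ∀ s : ℤ, m₀ + t + 2 ≤ s → V.G s = 0 := by
    intro s hs
    have hm₀t : (t:ℤ) + 1 ≤ m₀ := le_max_right _ _
    obtain ⟨j, hjt, hjm, hjne⟩ : ∃ j : ℤ, (t:ℤ) < j ∧ m₀ ≤ s - j ∧ s - j ≠ 2*j + 1 := by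
      by_cases hcase : s = 3*t + 4
      · exact ⟨t+2, by linarith, by omega, by omega⟩
      · exact ⟨t+1, by linarith, by omega, by omega⟩
    have hLz : V.L (s - j) = 0 := hL0 _ hjm
    have hmt : (t:ℤ) < s - j := by linarith
    set c : ℂ := (((s - j : ℤ) : ℂ) - 2 * (j:ℂ) - 1) / 2 with hcdef
    have hc : c ≠ 0 := by
      have hzc : ((s - j - 2*j - 1 : ℤ) : ℂ) ≠ 0 := Int.cast_ne_zero.mpr (by omega)
      intro h
      apply hzc
      rw [hcdef] at h
      push_cast at h ⊢
      linear_combination 2 * h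
    ext v
    have hrel := V.rel_LG (s - j) j hmt hjt v
    rw [hLz] at hrel
    simp only [LinearMap.zero_apply, map_zero, sub_zero, sub_self] at hrel
    rw [show s - j + j = s by ring] at hrel
    have h0 : c • V.G s v = 0 := by
      rw [hcdef]
      exact hrel.symm
    rcases smul_eq_zero.mp h0 with h | h
    · exact absurd h hc
    · simpa using h
  -- conclusion
  refine ⟨m₀.toNat + t + 2, by omega, by omega, ?_⟩
  intro m hmk
  have h1 : (m₀ : ℤ) ≤ m₀.toNat := Int.self_le_toNat m₀
  have hm1 : m₀ ≤ m := by push_cast at hmk ⊢; omega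
  have hm2 : m₀ + t + 2 ≤ m := by push_cast at hmk ⊢; omega
  constructor
  · intro v; rw [hL0 m hm1]; rfl
  · intro v; rw [hG0 m hm2]; rfl
end

section
/- Let t ∈ ℕ and let V be a nonzero b-module with L_i V = 0 for all integers i > t. Then for every integer j ≥ t, the subspace W = G_{j+1/2}V is a b-submodule of V, and W ≠ V. Consequently, if V is simple then G_{j+1/2}V = 0 for all j ≥ t. -/
/-- Let `t ∈ ℕ` and let `V` be a nonzero `b`-module with `L_i V = 0` for
all `i > t`.  Then for every `j ≥ t` the subspace `W = G_{j+1/2} V` is a `b`-submodule of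
`V` with `W ≠ V`; consequently, if `V` is simple then `G_{j+1/2} V = 0` for all `j ≥ t`. -/
theorem G_image_is_proper_submodule
    (V : BRep) (hne : ∃ v : V.carrier, v ≠ 0) (t : ℕ)
    (hvan : ∀ i : ℕ, t < i → ∀ v : V.carrier, V.L i v = 0) :
    (∀ j : ℕ, t ≤ j →
      V.Invariant (Submodule.map (V.G j) ⊤) ∧ Submodule.map (V.G j) ⊤ ≠ ⊤) ∧
    (V.IsSimple → ∀ j : ℕ, t ≤ j → ∀ v : V.carrier, V.G j v = 0) := by

  -- Key vanishing lemma: `G s` is zero whenever `s > t` and `s ≥ 2`.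
  have hG2 : ∀ s : ℕ, t < s → 2 ≤ s → ∀ v : V.carrier, V.G s v = 0 := by
    intro s hs hs2 v
    have h := V.rel_LG s 0 v
    simp only [hvan s hs, map_zero, sub_zero, zero_sub, neg_zero, Nat.cast_zero, mul_zero] at h
    have hc : (((s : ℂ) - 1) / 2) ≠ 0 := by
      have h1 : (s : ℂ) ≠ 1 := by
        intro hcontra
        have : ((s : ℕ) : ℂ) = ((1 : ℕ) : ℂ) := by push_cast; exact hcontra
        exact (by omega : s ≠ 1) (Nat.cast_injective this)
      intro hcontra
      apply h1
      field_simp at hcontra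
      linear_combination hcontra
    rcases smul_eq_zero.mp h.symm with hc' | hv0
    · exact absurd (by linear_combination hc') hc
    · simpa using hv0
  have key : ∀ j : ℕ, t ≤ j →
      V.Invariant (Submodule.map (V.G j) ⊤) ∧ Submodule.map (V.G j) ⊤ ≠ ⊤ := by
    intro j hj
    constructor
    · constructor
      · intro m v hv
        obtain ⟨w, -, rfl⟩ := hv
        rcases Nat.lt_or_ge t m with hm | hm
        · rw [hvan m hm]
          exact Submodule.zero_mem _
        · rcases Nat.eq_zero_or_pos m with rfl | hm1
          · have h := V.rel_LG 0 j w
            have h2 : V.L 0 (V.G j w) =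
                V.G j (V.L 0 w) + ((((0:ℕ) : ℂ) - 2 * j - 1) / 2) • V.G (0 + j) w :=
              sub_eq_iff_eq_add'.mp h
            rw [h2]
            refine Submodule.add_mem _ ⟨_, trivial, rfl⟩ (Submodule.smul_mem _ _ ?_)
            rw [Nat.zero_add]
            exact ⟨w, trivial, rfl⟩
          · have hz : V.G (m + j) w = 0 := hG2 (m + j) (by omega) (by omega) w
            have h := V.rel_LG m j w
            rw [hz, smul_zero, sub_eq_zero] at h
            rw [h]
            exact ⟨_, trivial, rfl⟩
      · intro k v hv
        obtain ⟨w, -, rfl⟩ := hv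
        have h := V.rel_GG j k w
        rw [hvan (j + k + 1) (by omega) w, smul_zero] at h
        have h2 : V.G k (V.G j w) = V.G j (-(V.G k w)) := by
          rw [map_neg, eq_neg_iff_add_eq_zero, add_comm]
          exact h
        rw [h2]
        exact ⟨_, trivial, rfl⟩
    · intro htop
      obtain ⟨v, hv⟩ := hne
      have h1 : v ∈ Submodule.map (V.G j) ⊤ := by rw [htop]; trivial
      obtain ⟨w, -, rfl⟩ := h1
      have h2 : w ∈ Submodule.map (V.G j) ⊤ := by rw [htop]; trivial
      obtain ⟨u, -, rfl⟩ := h2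
      have h := V.rel_GG j j u
      rw [hvan (j + j + 1) (by omega) u, smul_zero] at h
      apply hv
      have h3 : (2 : ℂ) • V.G j (V.G j u) = 0 := by rw [two_smul]; exact h
      rcases smul_eq_zero.mp h3 with hc | h0
      · exact absurd hc two_ne_zero
      · exact h0
  refine ⟨key, ?_⟩
  intro hsimple j hj v
  rcases hsimple.2 _ (key j hj).1 with hbot | htop
  · have : V.G j v ∈ Submodule.map (V.G j) ⊤ := ⟨v, trivial, rfl⟩
    rwa [hbot, Submodule.mem_bot] at this
  · exact absurd htop (key j hj).2
end

section
/- Let S be an N-module, t′ ∈ ℤ_+, and w ∈ S with L_n w = 0 for all n ≥ t′. Suppose the action of L_{t′} on S is locally finite. Then for every integer j > t′ and every m ∈ ℕ, the vector G_{j+mt′−1/2}w lies in the finite-dimensional subspace ∑_{n∈ℕ} ℂL_{t′}ⁿ G_{j−1/2}w; consequently the subspace ∑_{i∈ℤ_+} ℂG_{t′+i−1/2}w of S is finite-dimensional. -/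
/-- The action of `f` is locally finite: for every `v`, the span of `{fⁿ v : n ∈ ℕ}` is
finite dimensional. -/
def LocallyFiniteEnd {α : Type} [AddCommGroup α] [Module ℂ α] (f : α →ₗ[ℂ] α) : Prop :=
  ∀ v : α, FiniteDimensional ℂ
    (Submodule.span ℂ (Set.range fun n : ℕ => ((f : Module.End ℂ α) ^ n) v))

/-- Let `S` be a Neveu–Schwarz module, `t' ∈ ℤ_+`, and `w ∈ S` with
`L_n w = 0` for all `n ≥ t'`; suppose the action of `L_{t'}` on `S` is locally finite.
Then for every `j > t'` the subspace `V_G = ∑_{n ∈ ℕ} ℂ L_{t'}ⁿ G_{j-1/2} w` is finite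
dimensional and contains `G_{j + m t' - 1/2} w` for every `m ∈ ℕ`;  consequently the
subspace `∑_{i ∈ ℤ_+} ℂ G_{t' + i - 1/2} w` of `S` is finite dimensional. -/
theorem G_orbit_finite_dimensional
    (S : NSRep) (t' : ℕ) (ht : 0 < t') (w : S.carrier)
    (hw : ∀ n : ℤ, (t' : ℤ) ≤ n → S.L n w = 0)
    (hlf : LocallyFiniteEnd (S.L (t' : ℤ))) :
    (∀ j : ℤ, (t' : ℤ) < j →
      FiniteDimensional ℂ (Submodule.span ℂ
        (Set.range fun n : ℕ => ((S.L (t' : ℤ) : Module.End ℂ S.carrier) ^ n) (S.G j w))) ∧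
      ∀ m : ℕ, S.G (j + m * t') w ∈ Submodule.span ℂ
        (Set.range fun n : ℕ => ((S.L (t' : ℤ) : Module.End ℂ S.carrier) ^ n) (S.G j w))) ∧
    FiniteDimensional ℂ (Submodule.span ℂ
      (Set.range fun i : ℕ => S.G ((t' : ℤ) + 1 + i) w)) := by
  classical
  set f : Module.End ℂ S.carrier := (S.L (t' : ℤ) : Module.End ℂ S.carrier) with hf
  set V : ℤ → Submodule ℂ S.carrier := fun j =>
    Submodule.span ℂ (Set.range fun n : ℕ => (f ^ n) (S.G j w)) with hV
  have key : ∀ k : ℤ, (t' : ℤ) < k →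
      S.L (t' : ℤ) (S.G k w) = ((((t' : ℤ) : ℂ) - 2 * k + 1) / 2) • S.G ((t' : ℤ) + k) w := by
    intro k hk
    have h0 : S.L (t' : ℤ) w = 0 := hw _ le_rfl
    have h := S.rel_LG (t' : ℤ) k w
    rw [h0, map_zero, sub_zero] at h
    exact h
  have hc : ∀ k : ℤ, (t' : ℤ) < k → ((((t' : ℤ) : ℂ) - 2 * k + 1) / 2) ≠ 0 := by
    intro k hk
    have h1 : ((t' : ℤ) - 2 * k + 1 : ℤ) ≠ 0 := by omega
    have h3 : ((((t' : ℤ) - 2 * k + 1 : ℤ)) : ℂ) ≠ 0 := Int.cast_ne_zero.mpr h1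
    push_cast at h3
    exact div_ne_zero h3 two_ne_zero
  have hstab : ∀ (j : ℤ) (x : S.carrier), x ∈ V j → f x ∈ V j := by
    intro j x hx
    refine Submodule.span_induction ?_ ?_ ?_ ?_ hx
    · rintro y ⟨n, rfl⟩
      apply Submodule.subset_span
      refine ⟨n + 1, ?_⟩
      show (f ^ (n + 1)) (S.G j w) = f ((f ^ n) (S.G j w))
      rw [pow_succ', Module.End.mul_apply]
    · simp
    · intro a b _ _ ha hb
      rw [map_add]; exact Submodule.add_mem _ ha hb
    · intro c a _ ha
      rw [map_smul]; exact Submodule.smul_mem _ _ ha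
  have mem : ∀ j : ℤ, (t' : ℤ) < j → ∀ m : ℕ, S.G (j + m * t') w ∈ V j := by
    intro j hj m
    induction m with
    | zero =>
      apply Submodule.subset_span
      exact ⟨0, by simp⟩
    | succ m ih =>
      set k : ℤ := j + (m : ℤ) * (t' : ℤ) with hkdef
      have hk : (t' : ℤ) < k := by
        have h0 : 0 ≤ (m : ℤ) * (t' : ℤ) := by positivity
        omega
      have hkey := key k hk
      have harg : (t' : ℤ) + k = j + ((m + 1 : ℕ) : ℤ) * (t' : ℤ) := by
        rw [hkdef]; push_cast; ring
      have hG : S.G ((t' : ℤ) + k) w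
          = ((((t' : ℤ) : ℂ) - 2 * k + 1) / 2)⁻¹ • f (S.G k w) := by
        show _ = _ • S.L (t' : ℤ) (S.G k w)
        rw [hkey, smul_smul, inv_mul_cancel₀ (hc k hk), one_smul]
      rw [← harg, hG]
      exact Submodule.smul_mem _ _ (hstab _ _ ih)
  refine ⟨fun j hj => ⟨hlf (S.G j w), mem j hj⟩, ?_⟩
  have hfin : ∀ r : ℕ, FiniteDimensional ℂ (V ((t' : ℤ) + 1 + r)) :=
    fun r => hlf (S.G ((t' : ℤ) + 1 + r) w)
  set W : Submodule ℂ S.carrier :=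
    (Finset.range t').sup (fun r : ℕ => V ((t' : ℤ) + 1 + r)) with hW
  have hWfin : FiniteDimensional ℂ W := Submodule.finiteDimensional_finset_sup _ _
  have hle : Submodule.span ℂ (Set.range fun i : ℕ => S.G ((t' : ℤ) + 1 + i) w) ≤ W := by
    rw [Submodule.span_le]
    rintro x ⟨i, rfl⟩
    have h : ((i % t' : ℕ) : ℤ) + (t' : ℤ) * ((i / t' : ℕ) : ℤ) = (i : ℤ) := by
      exact_mod_cast Nat.mod_add_div i t'
    have harg : ((t' : ℤ) + 1 + i) = ((t' : ℤ) + 1 + (i % t' : ℕ)) + ((i / t' : ℕ) : ℤ) * (t' : ℤ) := by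
      linear_combination -h
    have hlt : (t' : ℤ) < (t' : ℤ) + 1 + (i % t' : ℕ) := by omega
    have hmem : S.G ((t' : ℤ) + 1 + i) w ∈ V ((t' : ℤ) + 1 + (i % t' : ℕ)) := by
      rw [harg]; exact mem _ hlt _
    have hVle : V ((t' : ℤ) + 1 + (i % t' : ℕ)) ≤ W := by
      rw [hW]
      exact Finset.le_sup (f := fun r : ℕ => V ((t' : ℤ) + 1 + r))
        (Finset.mem_range.mpr (Nat.mod_lt i ht))
    exact hVle hmem
  exact Submodule.finiteDimensional_of_le hle
end
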